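/- Let n ≥ 1 and let F be a facet of Δ(n) with elements listed in increasing order as v_1, …, v_r, where v_ℓ = (i_ℓ, j_ℓ, k_ℓ). Fix ℓ with 1 ≤ ℓ ≤ r and a coordinate position a ∈ {first, second, third} such that a_ℓ - a_{ℓ-1} > 1 if ℓ ≥ 2, or a_1 > 1 if ℓ = 1 (where a_m denotes the a-coordinate of v_m). Let v' be the triple obtained from v_ℓ by decreasing its a-coordinate by 1, and let G = (F \ {v_ℓ}) ∪ {v'}. Suppose the down-twist is safe, i.e.: if ℓ < r, then min over the three coordinates of (v_{ℓ+1} minus v') equals 1; and if ℓ = r, then the maximum coordinate of v' equals n. Then G is a facet of Δ(n). -/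

import Mathlib

/-!
Replacing `v` by `v'` keeps a chain: the gap condition puts `v'` strictly above the predecessor
of `v`, and `v' ≤ v` keeps it below the successors. For maximality, an extra element `w` of a
larger face must be incomparable with `v` (otherwise `F ∪ {w}` would be a face), hence lies
strictly above `v'`. If `v` has a successor `u`, then `w < u` is impossible because some
coordinate of `u - v'` equals `1`, while `u < w` would give `v < w`; if `v` is last, `v'` already
has a coordinate equal to `n`, leaving no room above it.
-/

/-- Vertices of `Δ(n)`: integer triples. -/
abbrev V : Type := ℕ × ℕ × ℕ

/-- The strict componentwise order on triples. -/
def slt (u v : V) : Prop := u.1 < v.1 ∧ u.2.1 < v.2.1 ∧ u.2.2 < v.2.2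

/-- A face of `Δ(n)`: a finite subset of `{1,…,n}³` that is a chain under `slt`. -/
def IsFace (n : ℕ) (F : Finset V) : Prop :=
  (∀ v ∈ F, v.1 ∈ Finset.Icc 1 n ∧ v.2.1 ∈ Finset.Icc 1 n ∧ v.2.2 ∈ Finset.Icc 1 n) ∧
  (∀ u ∈ F, ∀ v ∈ F, u ≠ v → slt u v ∨ slt v u)

/-- A facet of `Δ(n)`: an inclusion-maximal face. -/
def IsFacet (n : ℕ) (F : Finset V) : Prop :=
  IsFace n F ∧ ∀ G : Finset V, IsFace n G → F ⊆ G → F = G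

/-- The `a`-th coordinate of a triple. -/
def coord (a : Fin 3) (v : V) : ℕ := ![v.1, v.2.1, v.2.2] a

/-- Replace the `a`-th coordinate of a triple by `x`. -/
def setCoord (a : Fin 3) (x : ℕ) (v : V) : V :=
  if a = 0 then (x, v.2.1, v.2.2) else if a = 1 then (v.1, x, v.2.2) else (v.1, v.2.1, x)

open Relation

def InCube (n : ℕ) (v : V) : Prop :=
  v.1 ∈ Finset.Icc 1 n ∧ v.2.1 ∈ Finset.Icc 1 n ∧ v.2.2 ∈ Finset.Icc 1 n

instance : IsTrans V slt :=
  ⟨fun _ _ _ h₁ h₂ => ⟨h₁.1.trans h₂.1, h₁.2.1.trans h₂.2.1, h₁.2.2.trans h₂.2.2⟩⟩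

section Triples

variable {n : ℕ} {u v w : V} {a : Fin 3} {x : ℕ}

lemma ne_of_slt (h : slt u v) : u ≠ v := fun huv => h.1.ne (huv ▸ rfl)

lemma le_of_slt (h : slt u v) : u ≤ v := ⟨h.1.le, h.2.1.le, h.2.2.le⟩

lemma slt_of_le_of_slt (huv : u ≤ v) (hvw : slt v w) : slt u w :=
  ⟨huv.1.trans_lt hvw.1, huv.2.1.trans_lt hvw.2.1, huv.2.2.trans_lt hvw.2.2⟩

lemma slt_of_slt_of_le (huv : slt u v) (hvw : v ≤ w) : slt u w :=
  ⟨huv.1.trans_le hvw.1, huv.2.1.trans_le hvw.2.1, huv.2.2.trans_le hvw.2.2⟩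

lemma setCoord_le (h : x ≤ coord a v) : setCoord a x v ≤ v := by
  fin_cases a <;> simp_all [setCoord, coord, Prod.le_def]

lemma slt_setCoord (huv : slt u v) (hx : coord a u < x) : slt u (setCoord a x v) := by
  fin_cases a <;> simp_all [slt, setCoord, coord]

lemma InCube.setCoord (hv : InCube n v) (h₁ : 1 ≤ x) (hx : x ≤ coord a v) :
    InCube n (setCoord a x v) := by
  fin_cases a <;> simp_all [InCube, _root_.setCoord, coord] <;> omega

lemma max_lt_of_slt (hw : InCube n w) (h : slt u w) : max u.1 (max u.2.1 u.2.2) < n := by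
  simp only [InCube, Finset.mem_Icc] at hw
  obtain ⟨h₁, h₂, h₃⟩ := h
  omega

lemma two_le_min_sub_of_slt_of_slt (huv : slt u v) (hvw : slt v w) :
    2 ≤ min (w.1 - u.1) (min (w.2.1 - u.2.1) (w.2.2 - u.2.2)) := by
  obtain ⟨h₁, h₂, h₃⟩ := huv
  obtain ⟨h₁', h₂', h₃'⟩ := hvw
  omega

lemma incompRel_of_min_sub_eq_one {v' : V} (hvu : slt v u)
    (hmin : min (u.1 - v'.1) (min (u.2.1 - v'.2.1) (u.2.2 - v'.2.2)) = 1)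
    (hv'w : slt v' w) (hvw : ¬ slt v w) : IncompRel slt w u := by
  refine not_symmGen_iff.1 fun h => h.elim (fun hwu => ?_) fun huw => hvw (_root_.trans hvu huw)
  have := two_le_min_sub_of_slt_of_slt hv'w hwu
  omega

end Triples

lemma symmGen_setCoord_of_pairwise {L : List V} (hL : L.Pairwise slt) {ℓ : ℕ} (hℓ : ℓ < L.length)
    {a : Fin 3} {x : ℕ} (hx : x ≤ coord a (L.get ⟨ℓ, hℓ⟩))
    (hgap : ∀ h : 0 < ℓ, coord a (L.get ⟨ℓ - 1, by omega⟩) < x) {u : V} (hu : u ∈ L)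
    (hne : u ≠ L.get ⟨ℓ, hℓ⟩) : SymmGen slt u (setCoord a x (L.get ⟨ℓ, hℓ⟩)) := by
  obtain ⟨⟨m, hm⟩, rfl⟩ := List.mem_iff_get.1 hu
  rcases lt_trichotomy m ℓ with hlt | rfl | hgt
  · have hle : L.get ⟨m, hm⟩ ≤ L.get ⟨ℓ - 1, by omega⟩ :=
      (hL.imp le_of_slt).rel_get_of_le (Fin.mk_le_mk.2 (by omega))
    exact .inl <| slt_of_le_of_slt hle <|
      slt_setCoord (hL.rel_get_of_lt (Fin.mk_lt_mk.2 (by omega))) (hgap (by omega))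
  · exact absurd rfl hne
  · exact .inr <| slt_of_le_of_slt (setCoord_le hx) (hL.rel_get_of_lt (Fin.mk_lt_mk.2 hgt))

section Faces

variable {n : ℕ} {F G : Finset V} {v v' w : V}

lemma IsFace.subset (hG : IsFace n G) (h : F ⊆ G) : IsFace n F :=
  ⟨fun v hv => hG.1 v (h hv), fun u hu w hw => hG.2 u (h hu) w (h hw)⟩

lemma IsFace.insert (hF : IsFace n F) (hw : InCube n w)
    (hcomp : ∀ u ∈ F, u ≠ w → SymmGen slt u w) : IsFace n (insert w F) := by
  refine ⟨fun u hu => ?_, fun u hu u' hu' hne => ?_⟩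
  · obtain rfl | hu := Finset.mem_insert.1 hu
    exacts [hw, hF.1 u hu]
  · rcases Finset.mem_insert.1 hu with rfl | huF <;> rcases Finset.mem_insert.1 hu' with rfl | hu'F
    exacts [absurd rfl hne, (hcomp u' hu'F hne.symm).symm, hcomp u huF hne,
      hF.2 u huF u' hu'F hne]

lemma IsFacet.mem_of_forall_symmGen (hF : IsFacet n F) (hw : InCube n w)
    (hcomp : ∀ u ∈ F, u ≠ w → SymmGen slt u w) : w ∈ F :=
  (hF.2 _ (hF.1.insert hw hcomp) (Finset.subset_insert w F)).symm ▸ Finset.mem_insert_self w F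

theorem IsFacet.isFacet_insert_erase (hF : IsFacet n F) (hv : v ∈ F) (hle : v' ≤ v)
    (hG : IsFace n (insert v' (F.erase v)))
    (hsafe : ∀ w, InCube n w → slt v' w → IncompRel slt w v →
      ∃ u ∈ F.erase v, IncompRel slt w u) :
    IsFacet n (insert v' (F.erase v)) := by
  refine ⟨hG, fun H hH hGH => hGH.antisymm fun w hwH => ?_⟩
  by_contra hwG
  have hcompG : ∀ u ∈ insert v' (F.erase v), SymmGen slt w u := fun u hu =>
    hH.2 w hwH u (hGH hu) (by rintro rfl; exact hwG hu)
  have hwv : IncompRel slt w v := by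
    refine not_symmGen_iff.1 fun hc => ?_
    have hwF : w ∈ F := hF.mem_of_forall_symmGen (hH.1 w hwH) fun u hu hne => by
      by_cases huv : u = v
      · exact huv ▸ hc.symm
      · exact (hcompG u (Finset.mem_insert_of_mem (Finset.mem_erase.2 ⟨huv, hu⟩))).symm
    have hwne : w ≠ v := by
      rintro rfl
      exact hc.elim (ne_of_slt · rfl) (ne_of_slt · rfl)
    exact hwG (Finset.mem_insert_of_mem (Finset.mem_erase.2 ⟨hwne, hwF⟩))
  have hv'w : slt v' w :=
    (hcompG v' (Finset.mem_insert_self _ _)).resolve_left fun h => hwv.1 (slt_of_slt_of_le h hle)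
  obtain ⟨u, hu, hwu⟩ := hsafe w (hH.1 w hwH) hv'w hwv
  exact not_symmGen_iff.2 hwu (hcompG u (Finset.mem_insert_of_mem hu))

end Faces

/-- `ℓ` is a 0-based index into the increasing listing `L` of `F`. -/
theorem safe_down_twist_is_facet (n : ℕ) (F : Finset V) (hF : IsFacet n F)
    (L : List V) (hsort : L.Chain' slt) (htf : L.toFinset = F)
    (ℓ : ℕ) (hℓ : ℓ < L.length) (a : Fin 3) (v' : V)
    (hv' : v' = setCoord a (coord a (L.get ⟨ℓ, hℓ⟩) - 1) (L.get ⟨ℓ, hℓ⟩))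
    (hgap0 : ℓ = 0 → 1 < coord a (L.get ⟨ℓ, hℓ⟩))
    (hgap1 : 0 < ℓ → 1 < coord a (L.get ⟨ℓ, hℓ⟩) - coord a (L.get ⟨ℓ - 1, by omega⟩))
    (hsafe_mid : ∀ h : ℓ + 1 < L.length,
      min ((L.get ⟨ℓ + 1, h⟩).1 - v'.1)
        (min ((L.get ⟨ℓ + 1, h⟩).2.1 - v'.2.1) ((L.get ⟨ℓ + 1, h⟩).2.2 - v'.2.2)) = 1)
    (hsafe_last : ℓ + 1 = L.length → max v'.1 (max v'.2.1 v'.2.2) = n) :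
    IsFacet n (insert v' (F.erase (L.get ⟨ℓ, hℓ⟩))) := by
  subst hv'
  set v := L.get ⟨ℓ, hℓ⟩
  have hL : L.Pairwise slt := List.isChain_iff_pairwise.1 hsort
  have hmem : ∀ i (hi : i < L.length), L.get ⟨i, hi⟩ ∈ F := fun i hi =>
    htf ▸ List.mem_toFinset.2 (L.get_mem _)
  have hx : coord a v - 1 ≤ coord a v := Nat.sub_le _ _
  have hx₁ : 1 ≤ coord a v - 1 := by
    rcases Nat.eq_zero_or_pos ℓ with h | h
    · have := hgap0 h; omega
    · have := hgap1 h; omega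
  have hface : IsFace n (insert (setCoord a (coord a v - 1) v) (F.erase v)) :=
    (hF.1.subset (F.erase_subset v)).insert (InCube.setCoord (hF.1.1 v (hmem ℓ hℓ)) hx₁ hx)
      fun u hu _ => symmGen_setCoord_of_pairwise hL hℓ hx (fun h => by have := hgap1 h; omega)
        (List.mem_toFinset.1 (htf ▸ Finset.mem_of_mem_erase hu)) (Finset.ne_of_mem_erase hu)
  refine hF.isFacet_insert_erase (hmem ℓ hℓ) (setCoord_le hx) hface fun w hw hv'w hwv => ?_
  rcases Nat.lt_or_ge (ℓ + 1) L.length with hmid | hlast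
  · have hvu : slt v (L.get ⟨ℓ + 1, hmid⟩) := hL.rel_get_of_lt (Fin.mk_lt_mk.2 (by omega))
    exact ⟨_, Finset.mem_erase.2 ⟨(ne_of_slt hvu).symm, hmem _ hmid⟩,
      incompRel_of_min_sub_eq_one hvu (hsafe_mid hmid) hv'w hwv.2⟩
  · exact absurd (hsafe_last (by omega)) (max_lt_of_slt hw hv'w).ne
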